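/- A collection C of non-empty subsets of a finite set L equals the set of clusters {L(v) : v ∈ V(T)} of some phylogenetic tree T on L if and only if C is a hierarchy on L, i.e., L ∈ C, every singleton {x} with x ∈ L is in C, and any two members p, q ∈ C satisfy p ∩ q ∈ {p, q, ∅}. -/

import Mathlib

namespace Phylo

/-- Rooted trees with leaves labeled by `L`. -/
inductive T (L : Type) where
  | leaf (x : L) : T L
  | node (ts : List (T L)) : T L

/-- `Subtree s t`: `s` is the subtree of `t` rooted at some vertex of `t`. -/
inductive Subtree {L : Type} : T L → T L → Prop where
  | refl (t : T L) : Subtree t t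
  | child {s u : T L} {ts : List (T L)} : s ∈ ts → Subtree u s → Subtree u (T.node ts)

/-- The list of leaf labels of a tree. -/
def leafList {L : Type} : T L → List L
  | T.leaf x => [x]
  | T.node ts => (ts.attach.map (fun s => leafList s.1)).flatten
decreasing_by all_goals (simp_wf; have := List.sizeOf_lt_of_mem s.2; omega)

/-- A phylogenetic tree: every inner vertex has at least two children. -/
inductive IsPhylo {L : Type} : T L → Prop where
  | leaf (x : L) : IsPhylo (T.leaf x)
  | node {ts : List (T L)} : 2 ≤ ts.length → (∀ t ∈ ts, IsPhylo t) → IsPhylo (T.node ts)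

/-- A phylogenetic tree with pairwise distinct leaf labels. -/
def PhyloTree {L : Type} (t : T L) : Prop := IsPhylo t ∧ (leafList t).Nodup

/-- A binary tree: every inner vertex has exactly two children. -/
inductive BinaryT {L : Type} : T L → Prop where
  | leaf (x : L) : BinaryT (T.leaf x)
  | node {ts : List (T L)} : ts.length = 2 → (∀ t ∈ ts, BinaryT t) → BinaryT (T.node ts)

def numVertices {L : Type} : T L → ℕ
  | T.leaf _ => 1
  | T.node ts => 1 + (ts.attach.map (fun s => numVertices s.1)).sum
decreasing_by all_goals (simp_wf; have := List.sizeOf_lt_of_mem s.2; omega)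

def numLeaves {L : Type} : T L → ℕ
  | T.leaf _ => 1
  | T.node ts => (ts.attach.map (fun s => numLeaves s.1)).sum
decreasing_by all_goals (simp_wf; have := List.sizeOf_lt_of_mem s.2; omega)

def numInner {L : Type} : T L → ℕ
  | T.leaf _ => 0
  | T.node ts => 1 + (ts.attach.map (fun s => numInner s.1)).sum
decreasing_by all_goals (simp_wf; have := List.sizeOf_lt_of_mem s.2; omega)

/-- `C` is a cluster of `t`: the set of leaves below some vertex of `t`. -/
def IsCluster {L : Type} (t : T L) (C : Set L) : Prop :=
  ∃ s, Subtree s t ∧ ∀ x, x ∈ leafList s ↔ x ∈ C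

def clusterSet {L : Type} (t : T L) : Set (Set L) := {C | IsCluster t C}

/-- The tree `t` displays the rooted triple `(ab|c)`. -/
def Displays {L : Type} (t : T L) (a b c : L) : Prop :=
  a ≠ b ∧ a ≠ c ∧ b ≠ c ∧ a ∈ leafList t ∧ b ∈ leafList t ∧ c ∈ leafList t ∧
    ∃ s, Subtree s t ∧ a ∈ leafList s ∧ b ∈ leafList s ∧ c ∉ leafList s

/-- A rooted triple `(ab|c)`. -/
structure Trip (L : Type) where
  a : L
  b : L
  c : L

def Trip.proper {L : Type} (r : Trip L) : Prop := r.a ≠ r.b ∧ r.a ≠ r.c ∧ r.b ≠ r.c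

def DisplaysT {L : Type} (t : T L) (r : Trip L) : Prop := Displays t r.a r.b r.c

def DisplaysAll {L : Type} (t : T L) (R : Set (Trip L)) : Prop := ∀ r ∈ R, DisplaysT t r

def tripLeaves {L : Type} (r : Trip L) : Set L := {r.a, r.b, r.c}

/-- The leaf set `L_R` of a triple set. -/
def leafSetR {L : Type} (R : Set (Trip L)) : Set L := ⋃ r ∈ R, tripLeaves r

/-- `t` is a phylogenetic tree on the leaf set `L_R` displaying all triples of `R`. -/
def IsTreeFor {L : Type} (t : T L) (R : Set (Trip L)) : Prop :=
  PhyloTree t ∧ (∀ x, x ∈ leafList t ↔ x ∈ leafSetR R) ∧ DisplaysAll t R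

/-- `R` is consistent: some phylogenetic tree on `L_R` displays all triples of `R`. -/
def Consistent {L : Type} (R : Set (Trip L)) : Prop := ∃ t, IsTreeFor t R

/-- `R` is consistent relative to the leaf set `S`. -/
def ConsistentOn {L : Type} (R : Set (Trip L)) (S : Set L) : Prop :=
  ∃ t : T L, PhyloTree t ∧ (∀ x, x ∈ leafList t ↔ x ∈ S) ∧ DisplaysAll t R

/-- The closure of `R`: all triples displayed by every phylogenetic tree on `L_R`
displaying `R`. -/
def cl {L : Type} (R : Set (Trip L)) : Set (Trip L) :=
  {r | ∀ t : T L, IsTreeFor t R → DisplaysT t r}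

/-- Membership of the (unordered) rooted triple `(xy|z)` in `R`. -/
def MemS {L : Type} (R : Set (Trip L)) (x y z : L) : Prop :=
  Trip.mk x y z ∈ R ∨ Trip.mk y x z ∈ R

/-- All triples of `R` have pairwise distinct leaves taken from `S`. -/
def ProperOn {L : Type} (R : Set (Trip L)) (S : Set L) : Prop :=
  ∀ r ∈ R, r.a ∈ S ∧ r.b ∈ S ∧ r.c ∈ S ∧ r.proper

/-- `R` is dense on `S`: each 3-element subset of `S` carries at least one triple of `R`. -/
def DenseOn {L : Type} (R : Set (Trip L)) (S : Set L) : Prop :=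
  ProperOn R S ∧ ∀ x y z : L, x ∈ S → y ∈ S → z ∈ S → x ≠ y → x ≠ z → y ≠ z →
    (MemS R x y z ∨ MemS R x z y ∨ MemS R y z x)

/-- `R` is strictly dense on `S`: each 3-element subset of `S` carries exactly one
of the three possible rooted triples. -/
def StrictlyDense {L : Type} (R : Set (Trip L)) (S : Set L) : Prop :=
  ProperOn R S ∧ ∀ x y z : L, x ∈ S → y ∈ S → z ∈ S → x ≠ y → x ≠ z → y ≠ z →
    ((MemS R x y z ∧ ¬ MemS R x z y ∧ ¬ MemS R y z x) ∨
     (¬ MemS R x y z ∧ MemS R x z y ∧ ¬ MemS R y z x) ∨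
     (¬ MemS R x y z ∧ ¬ MemS R x z y ∧ MemS R y z x))

/-- The Aho graph `[R, S]`: vertices `S`, edges `{x,y}` for triples `(xy|z) ∈ R`
with `x,y,z ∈ S`. -/
def ahoGraph {L : Type} (R : Set (Trip L)) (S : Set L) : SimpleGraph S where
  Adj x y := x ≠ y ∧ ∃ r ∈ R, (r.c ∈ S) ∧
      ((r.a = (x : L) ∧ r.b = (y : L)) ∨ (r.a = (y : L) ∧ r.b = (x : L)))
  symm := by
    constructor
    rintro x y ⟨hxy, r, hr, hc, h⟩
    exact ⟨hxy.symm, r, hr, hc, h.symm⟩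
  loopless := by constructor; rintro x ⟨h, -⟩; exact h rfl


end Phylo

namespace Phylo

theorem leafList_leaf {L : Type} (x : L) : leafList (T.leaf x) = [x] := by
  simp [leafList]

theorem leafList_node {L : Type} (ts : List (T L)) :
    leafList (T.node ts) = (ts.map leafList).flatten := by
  rw [leafList]
  congr 1
  simp

theorem mem_leafList_node {L : Type} {ts : List (T L)} {x : L} :
    x ∈ leafList (T.node ts) ↔ ∃ s ∈ ts, x ∈ leafList s := by
  simp [leafList_node]

theorem Subtree.trans {L : Type} {a b c : T L} (h1 : Subtree a b) (h2 : Subtree b c) :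
    Subtree a c := by
  induction h2 with
  | refl => exact h1
  | child hmem _ ih => exact Subtree.child hmem (ih h1)

theorem mem_leafList_of_subtree {L : Type} {s t : T L} (h : Subtree s t) :
    ∀ x ∈ leafList s, x ∈ leafList t := by
  induction h with
  | refl => exact fun x hx => hx
  | child hmem _ ih =>
      intro x hx
      exact mem_leafList_node.2 ⟨_, hmem, ih x hx⟩

theorem leaf_subtree {L : Type} {x : L} : ∀ t : T L, x ∈ leafList t → Subtree (T.leaf x) t
  | T.leaf y, h => by
      rw [leafList_leaf] at h
      simp at h
      subst h
      exact Subtree.refl _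
  | T.node ts, h => by
      rw [mem_leafList_node] at h
      obtain ⟨s, hs, hxs⟩ := h
      exact Subtree.child hs (leaf_subtree s hxs)
decreasing_by simp_wf; have := List.sizeOf_lt_of_mem hs; omega

theorem nodup_of_child {L : Type} {ts : List (T L)} (h : (leafList (T.node ts)).Nodup)
    {s : T L} (hs : s ∈ ts) : (leafList s).Nodup := by
  rw [leafList_node, List.nodup_flatten] at h
  exact h.1 _ (List.mem_map_of_mem hs)

theorem disjoint_of_children {L : Type} {ts : List (T L)} (h : (leafList (T.node ts)).Nodup)
    {s u : T L} (hs : s ∈ ts) (hu : u ∈ ts) (hne : s ≠ u) :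
    ∀ x ∈ leafList s, x ∉ leafList u := by
  rw [leafList_node, List.nodup_flatten] at h
  have hp : ts.Pairwise (fun a b => List.Disjoint (leafList a) (leafList b)) :=
    List.pairwise_map.1 h.2
  have hsym : Symmetric (fun a b : T L => List.Disjoint (leafList a) (leafList b)) :=
    fun a b hab => List.Disjoint.symm hab
  exact (haveI : Std.Symm (fun a b : T L => List.Disjoint (leafList a) (leafList b)) := ⟨fun a b h => hsym h⟩; hp.forall hs hu hne)

theorem laminar {L : Type} : ∀ t : T L, (leafList t).Nodup →
    ∀ s u : T L, Subtree s t → Subtree u t →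
    (∀ x ∈ leafList s, x ∈ leafList u) ∨ (∀ x ∈ leafList u, x ∈ leafList s) ∨
      (∀ x ∈ leafList s, x ∉ leafList u)
  | T.leaf y, _, s, u, h1, h2 => by
      cases h1; cases h2; exact Or.inl fun x hx => hx
  | T.node ts, hnd, s, u, h1, h2 => by
      cases h1 with
      | refl => exact Or.inr (Or.inl (mem_leafList_of_subtree h2))
      | @child c1 _ _ hc1 hsub1 =>
        cases h2 with
        | refl => exact Or.inl (mem_leafList_of_subtree (Subtree.child hc1 hsub1))
        | @child c2 _ _ hc2 hsub2 =>
          by_cases hcc : c1 = c2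
          · subst hcc
            exact laminar c1 (nodup_of_child hnd hc1) s u hsub1 hsub2
          · refine Or.inr (Or.inr fun x hx hxu => ?_)
            exact disjoint_of_children hnd hc1 hc2 hcc x
              (mem_leafList_of_subtree hsub1 x hx) (mem_leafList_of_subtree hsub2 x hxu)
decreasing_by simp_wf; have := List.sizeOf_lt_of_mem hc1; omega

end Phylo

namespace Phylo

theorem build {L : Type} : ∀ n : ℕ, ∀ S : Set L, S.Finite → S.Nonempty → S.ncard ≤ n →
    ∀ C : Set (Set L), (∀ p ∈ C, p ⊆ S ∧ p.Nonempty) → S ∈ C → (∀ x ∈ S, {x} ∈ C) →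
    (∀ p ∈ C, ∀ q ∈ C, p ∩ q = p ∨ p ∩ q = q ∨ p ∩ q = (∅ : Set L)) →
    ∃ t : T L, PhyloTree t ∧ (∀ x, x ∈ leafList t ↔ x ∈ S) ∧
      (∀ p : Set L, p ∈ C ↔ IsCluster t p) := by
  intro n
  induction n with
  | zero =>
      intro S hfin hne hcard
      exact absurd hcard (by have := (Set.ncard_pos hfin).2 hne; omega)
  | succ n ih =>
      intro S hfin hne hcard C hC hSC hsing hlam
      by_cases hone : S.ncard = 1
      · -- singleton case
        obtain ⟨a, rfl⟩ := Set.ncard_eq_one.1 hone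
        refine ⟨T.leaf a, ⟨IsPhylo.leaf a, by simp [leafList_leaf]⟩, ?_, ?_⟩
        · intro x; simp [leafList_leaf]
        · intro p
          constructor
          · intro hp
            have : p = {a} := by
              obtain ⟨hsub, hnep⟩ := hC p hp
              exact (Set.Nonempty.subset_singleton_iff hnep).1 hsub
            subst this
            exact ⟨T.leaf a, Subtree.refl _, by intro x; simp [leafList_leaf]⟩
          · rintro ⟨s, hsub, hiff⟩
            cases hsub
            have : p = {a} := by
              ext x
              rw [← hiff x, leafList_leaf]
              simp
            subst this
            exact hSC
      · -- S has at least two elements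
        have h2 : 1 < S.ncard := by
          have := (Set.ncard_pos hfin).2 hne; omega
        have hCfin : C.Finite := by
          apply Set.Finite.subset hfin.finite_subsets
          intro p hp; exact (hC p hp).1
        set M : Set (Set L) := {p | p ∈ C ∧ p ≠ S ∧ ∀ q ∈ C, q ≠ S → p ⊆ q → p = q} with hM
        have hmax_ex : ∀ p ∈ C, p ≠ S → ∃ m ∈ M, p ⊆ m := by
          intro p hp hpS
          have hDfin : {q | q ∈ C ∧ q ≠ S ∧ p ⊆ q}.Finite :=
            hCfin.subset (fun q hq => hq.1)
          have hDne : {q | q ∈ C ∧ q ≠ S ∧ p ⊆ q}.Nonempty := ⟨p, hp, hpS, subset_rfl⟩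
          obtain ⟨m, hmD, hmmax⟩ := Set.Finite.exists_maximalFor id _ hDfin hDne
          refine ⟨m, ⟨hmD.1, hmD.2.1, ?_⟩, hmD.2.2⟩
          intro q hq hqS hmq
          exact Set.Subset.antisymm hmq (hmmax (j := q) ⟨hq, hqS, hmD.2.2.trans hmq⟩ hmq)
        have hcover : ∀ x ∈ S, ∃ m ∈ M, x ∈ m := by
          intro x hx
          have hxS : ({x} : Set L) ≠ S := by
            intro h
            obtain ⟨a, ha, b, hb, hab⟩ := (Set.one_lt_ncard hfin).1 h2
            rw [← h] at ha hb
            simp at ha hb; subst ha; subst hb; exact hab rfl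
          obtain ⟨m, hm, hsub⟩ := hmax_ex {x} (hsing x hx) hxS
          exact ⟨m, hm, hsub rfl⟩
        have hsubS : ∀ m ∈ M, m ⊆ S := fun m hm => (hC m hm.1).1
        have hdisj : ∀ m ∈ M, ∀ m' ∈ M, m ≠ m' → m ∩ m' = ∅ := by
          intro m hm m' hm' hne'
          rcases hlam m hm.1 m' hm'.1 with h | h | h
          · exact absurd (hm.2.2 m' hm'.1 hm'.2.1 (Set.inter_eq_left.1 h)) hne'
          · exact absurd ((hm'.2.2 m hm.1 hm.2.1 (Set.inter_eq_right.1 h)).symm) hne'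
          · exact h
        have hMfin : M.Finite := hCfin.subset (fun m hm => hm.1)
        -- trees for members of M
        have hch : ∀ m : Set L, ∃ t : T L, m ∈ M →
            PhyloTree t ∧ (∀ x, x ∈ leafList t ↔ x ∈ m) ∧
              (∀ p : Set L, p ∈ {q | q ∈ C ∧ q ⊆ m} ↔ IsCluster t p) := by
          intro m
          by_cases hm : m ∈ M
          · have hmS : m ⊂ S := ⟨hsubS m hm, fun h => hm.2.1 (Set.Subset.antisymm (hsubS m hm) h)⟩
            have hmfin : m.Finite := hfin.subset hmS.1
            have hmcard : m.ncard ≤ n := by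
              have := Set.ncard_lt_ncard hmS hfin; omega
            obtain ⟨t, ht⟩ := ih m hmfin (hC m hm.1).2 hmcard {q | q ∈ C ∧ q ⊆ m}
              (fun p hp => ⟨hp.2, (hC p hp.1).2⟩) ⟨hm.1, subset_rfl⟩
              (fun x hx => ⟨hsing x (hmS.1 hx), by simpa using hx⟩)
              (fun p hp q hq => hlam p hp.1 q hq.1)
            exact ⟨t, fun _ => ht⟩
          · exact ⟨T.node [], fun h => absurd h hm⟩
        set g : Set L → T L := fun m => (hch m).choose with hgdef
        have hg : ∀ m ∈ M, PhyloTree (g m) ∧ (∀ x, x ∈ leafList (g m) ↔ x ∈ m) ∧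
            (∀ p : Set L, p ∈ {q | q ∈ C ∧ q ⊆ m} ↔ IsCluster (g m) p) :=
          fun m hm => (hch m).choose_spec hm
        set lM : List (Set L) := hMfin.toFinset.toList with hlMdef
        have hlMmem : ∀ m : Set L, m ∈ lM ↔ m ∈ M := by
          intro m; rw [hlMdef, Finset.mem_toList, Set.Finite.mem_toFinset]
        have hlMnd : lM.Nodup := Finset.nodup_toList _
        set ts : List (T L) := lM.map g with htsdef
        -- membership in leafList
        have hmemleaf : ∀ x, x ∈ leafList (T.node ts) ↔ x ∈ S := by
          intro x
          rw [mem_leafList_node]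
          constructor
          · rintro ⟨s, hs, hxs⟩
            rw [htsdef, List.mem_map] at hs
            obtain ⟨m, hm, rfl⟩ := hs
            have hm' := (hlMmem m).1 hm
            exact hsubS m hm' (((hg m hm').2.1 x).1 hxs)
          · intro hx
            obtain ⟨m, hm, hxm⟩ := hcover x hx
            exact ⟨g m, List.mem_map_of_mem (f := g) ((hlMmem m).2 hm), ((hg m hm).2.1 x).2 hxm⟩
        -- two distinct members of M
        have hlen : 2 ≤ ts.length := by
          obtain ⟨x, hx⟩ := hne
          obtain ⟨m, hm, hxm⟩ := hcover x hx
          obtain ⟨y, hyS, hym⟩ := Set.exists_of_ssubset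
            (⟨hsubS m hm, fun h => hm.2.1 (Set.Subset.antisymm (hsubS m hm) h)⟩ : m ⊂ S)
          obtain ⟨m', hm', hym'⟩ := hcover y hyS
          have hmm' : m ≠ m' := fun h => hym (h ▸ hym')
          have h1 : m ∈ lM := (hlMmem m).2 hm
          have h1' : m' ∈ lM := (hlMmem m').2 hm'
          rw [htsdef, List.length_map]
          by_contra hcon
          push_neg at hcon
          interval_cases hl : lM.length
          · rw [List.length_eq_zero_iff] at hl; rw [hl] at h1; simp at h1
          · obtain ⟨a, ha⟩ := List.length_eq_one_iff.1 hl
            rw [ha] at h1 h1'; simp at h1 h1'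
            exact hmm' (h1.trans h1'.symm)
        -- nodup
        have hnd : (leafList (T.node ts)).Nodup := by
          rw [leafList_node, List.nodup_flatten]
          constructor
          · intro l hl
            rw [List.mem_map] at hl
            obtain ⟨s, hs, rfl⟩ := hl
            rw [htsdef, List.mem_map] at hs
            obtain ⟨m, hm, rfl⟩ := hs
            exact ((hg m ((hlMmem m).1 hm)).1).2
          · rw [htsdef, List.map_map]
            rw [List.pairwise_map]
            refine List.Pairwise.imp_of_mem ?_ hlMnd
            intro m m' hm hm' hne'
            intro x hx hx'
            have hmM := (hlMmem m).1 hm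
            have hmM' := (hlMmem m').1 hm'
            have hxm : x ∈ m := ((hg m hmM).2.1 x).1 hx
            have hxm' : x ∈ m' := ((hg m' hmM').2.1 x).1 hx'
            have := hdisj m hmM m' hmM' hne'
            have : x ∈ m ∩ m' := ⟨hxm, hxm'⟩
            rw [hdisj m hmM m' hmM' hne'] at this
            exact this
        refine ⟨T.node ts, ⟨IsPhylo.node hlen ?_, hnd⟩, hmemleaf, ?_⟩
        · intro s hs
          rw [htsdef, List.mem_map] at hs
          obtain ⟨m, hm, rfl⟩ := hs
          exact ((hg m ((hlMmem m).1 hm)).1).1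
        · intro p
          constructor
          · intro hp
            by_cases hpS : p = S
            · subst hpS
              exact ⟨T.node ts, Subtree.refl _, hmemleaf⟩
            · obtain ⟨m, hm, hpm⟩ := hmax_ex p hp hpS
              obtain ⟨s, hsub, hiff⟩ := ((hg m hm).2.2 p).1 ⟨hp, hpm⟩
              exact ⟨s, Subtree.child (List.mem_map_of_mem (f := g) ((hlMmem m).2 hm)) hsub, hiff⟩
          · rintro ⟨s, hsub, hiff⟩
            cases hsub with
            | refl =>
              have : p = S := Set.ext fun x => (hiff x).symm.trans (hmemleaf x)
              rw [this]; exact hSC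
            | @child c _ _ hc hsub' =>
              rw [htsdef, List.mem_map] at hc
              obtain ⟨m, hm, rfl⟩ := hc
              have hmM := (hlMmem m).1 hm
              exact (((hg m hmM).2.2 p).2 ⟨s, hsub', hiff⟩).1

end Phylo

open Phylo in
/-- A collection `C` of non-empty subsets of a finite set `L` is the set of
clusters of some phylogenetic tree on `L` if and only if `C` is a hierarchy on
`L`: `L ∈ C`, every singleton is in `C`, and any two members `p, q` satisfy
`p ∩ q ∈ {p, q, ∅}`. -/
theorem clusters_iff_hierarchy {L : Type} (S : Set L)
    (hfin : S.Finite) (hne : S.Nonempty)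
    (C : Set (Set L)) (hC : ∀ p ∈ C, p ⊆ S ∧ p.Nonempty) :
    (∃ t : T L, PhyloTree t ∧ (∀ x, x ∈ leafList t ↔ x ∈ S) ∧
        (∀ p : Set L, p ∈ C ↔ IsCluster t p)) ↔
      (S ∈ C ∧ (∀ x ∈ S, {x} ∈ C) ∧
        ∀ p ∈ C, ∀ q ∈ C, p ∩ q = p ∨ p ∩ q = q ∨ p ∩ q = (∅ : Set L)) := by
  constructor
  · rintro ⟨t, ⟨hphy, hnd⟩, hleaf, hclu⟩
    refine ⟨?_, ?_, ?_⟩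
    · exact (hclu S).2 ⟨t, Subtree.refl _, hleaf⟩
    · intro x hx
      refine (hclu {x}).2 ⟨T.leaf x, Phylo.leaf_subtree t ((hleaf x).2 hx), ?_⟩
      intro y; rw [Phylo.leafList_leaf]; simp
    · intro p hp q hq
      obtain ⟨s1, h1, e1⟩ := (hclu p).1 hp
      obtain ⟨s2, h2, e2⟩ := (hclu q).1 hq
      rcases Phylo.laminar t hnd s1 s2 h1 h2 with h | h | h
      · left; rw [Set.inter_eq_left]; intro x hx
        exact (e2 x).1 (h x ((e1 x).2 hx))
      · right; left; rw [Set.inter_eq_right]; intro x hx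
        exact (e1 x).1 (h x ((e2 x).2 hx))
      · right; right
        ext x
        simp only [Set.mem_inter_iff, Set.mem_empty_iff_false, iff_false]
        rintro ⟨hxp, hxq⟩
        exact h x ((e1 x).2 hxp) ((e2 x).2 hxq)
  · rintro ⟨h1, h2, h3⟩
    exact Phylo.build S.ncard S hfin hne le_rfl C hC h1 h2 h3
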